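/- If a ∈ A₊ is superharmonic for a Markov operator T (T(a) ≤ a), then its support projection p := supp a is also superharmonic: T(p) ≤ p. -/

import Mathlib

open Filter Topology ContinuousLinearMap

namespace QMP

variable {H : Type*} [NormedAddCommGroup H] [InnerProductSpace ℂ H] [CompleteSpace H]

/-- `T` is a (quantum) Markov operator on the von Neumann algebra `A`:
a normal, unital, completely positive linear map leaving `A` invariant. -/
structure IsMarkov (A : VonNeumannAlgebra H) (T : (H →L[ℂ] H) → (H →L[ℂ] H)) : Prop where
  linear : IsLinearMap ℂ T
  mapsSelf : ∀ x ∈ A, T x ∈ A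
  unital : T 1 = 1
  cp : ∀ (n : ℕ) (a b : Fin n → (H →L[ℂ] H)),
    0 ≤ ∑ i : Fin n, ∑ j : Fin n, star (b i) * T (star (a i) * a j) * b j
  normal : ∀ {ι : Type} [Preorder ι] [IsDirected ι (· ≤ ·)] (f : ι → (H →L[ℂ] H))
    (y : H →L[ℂ] H), Monotone f → IsLUB (Set.range f) y →
      IsLUB (Set.range fun i => T (f i)) (T y)

/-- `y = ∑ₙ Tⁿ x` with convergence in the strong operator topology. -/
def SOTSum (T : (H →L[ℂ] H) → (H →L[ℂ] H)) (x y : H →L[ℂ] H) : Prop :=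
  ∀ η : H, Tendsto (fun N => ∑ n ∈ Finset.range N, (T^[n] x) η) atTop (𝓝 (y η))

/-- `x ∈ A₊` is `T`-summable: `∑ₙ Tⁿ x` converges strongly to an element of `A₊`. -/
def TSummable (A : VonNeumannAlgebra H) (T : (H →L[ℂ] H) → (H →L[ℂ] H))
    (x : H →L[ℂ] H) : Prop :=
  x ∈ A ∧ 0 ≤ x ∧ ∃ y, y ∈ A ∧ 0 ≤ y ∧ SOTSum T x y

/-- `y` is a potential for `T`: `y = ∑ₙ Tⁿ x` for some `x ∈ A₊`. -/
def IsPotential (A : VonNeumannAlgebra H) (T : (H →L[ℂ] H) → (H →L[ℂ] H))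
    (y : H →L[ℂ] H) : Prop :=
  y ∈ A ∧ 0 ≤ y ∧ ∃ x, x ∈ A ∧ 0 ≤ x ∧ SOTSum T x y

/-- `p` is an orthogonal projection belonging to `A`. -/
def IsProj (A : VonNeumannAlgebra H) (p : H →L[ℂ] H) : Prop :=
  p ∈ A ∧ IsSelfAdjoint p ∧ IsIdempotentElem p

/-- `p` is the support projection of the self-adjoint element `a`. -/
def IsSupport (A : VonNeumannAlgebra H) (a p : H →L[ℂ] H) : Prop :=
  IsProj A p ∧ a = p * a * p ∧ ∀ q, IsProj A q → a = q * a * q → p ≤ q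

/-- `s` is the supremum of the family of projections `q` in the projection lattice of `A`. -/
def IsProjSup (A : VonNeumannAlgebra H) {ι : Type*} (q : ι → (H →L[ℂ] H))
    (s : H →L[ℂ] H) : Prop :=
  IsProj A s ∧ (∀ i, q i ≤ s) ∧ ∀ r, IsProj A r → (∀ i, q i ≤ r) → s ≤ r

end QMP

/-!
Write `q = 1 - p`, so that `q a q = 0`. The elements `eₙ = min((n+1)a, 1)` of `A` increase
strongly to the range projection of `a`; this projection lies in `A` (its range is invariant under
the commutant), hence it is `p`. By normality `T p = sup T eₙ`. Each `T eₙ` satisfies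
`0 ≤ T eₙ ≤ 1` and `q (T eₙ) q ≤ (n+1) q (T a) q ≤ (n+1) q a q = 0`, which forces `T eₙ ≤ p`.
-/

section NonUnitalCStarAlgebra

variable {A : Type*} [NonUnitalCStarAlgebra A] [PartialOrder A] [StarOrderedRing A]

theorem mul_eq_zero_of_star_conjugate_nonpos {x c : A} (hx : 0 ≤ x) (h : star c * x * c ≤ 0) :
    x * c = 0 := by
  have hconj : star c * x * c = 0 := le_antisymm h (star_left_conjugate_nonneg hx c)
  have hsqrt : CFC.sqrt x * c = 0 := by
    rw [← norm_eq_zero, ← sq_eq_zero_iff, ← CFC.norm_star_mul_mul_self_of_nonneg c hx, hconj,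
      norm_zero]
  rw [← CFC.sqrt_mul_sqrt_self x, mul_assoc, hsqrt, mul_zero]

theorem mul_eq_zero_of_le_of_mul_eq_zero {x y c : A} (hx : 0 ≤ x) (hxy : x ≤ y) (hy : y * c = 0) :
    x * c = 0 :=
  mul_eq_zero_of_star_conjugate_nonpos hx <| by
    simpa [mul_assoc, hy] using star_left_conjugate_le_conjugate hxy c

end NonUnitalCStarAlgebra

section CStarAlgebra

variable {A : Type*} [CStarAlgebra A] [PartialOrder A] [StarOrderedRing A]

theorem IsStarProjection.le_of_conjugate_one_sub_nonpos {e x : A} (he : IsStarProjection e)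
    (hx0 : 0 ≤ x) (hx1 : x ≤ 1) (h : (1 - e) * x * (1 - e) ≤ 0) : x ≤ e := by
  have hxq : x * (1 - e) = 0 :=
    mul_eq_zero_of_star_conjugate_nonpos hx0 (by rwa [he.one_sub.isSelfAdjoint.star_eq])
  have hxe : x * e = x := by rw [mul_sub, mul_one, sub_eq_zero] at hxq; exact hxq.symm
  have hex : e * x = x := by
    simpa [hx0.star_eq, he.isSelfAdjoint.star_eq] using congr(star $hxe)
  calc x = star e * x * e := by rw [he.isSelfAdjoint.star_eq, hex, hxe]
    _ ≤ star e * 1 * e := star_left_conjugate_le_conjugate hx1 e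
    _ = e := by rw [mul_one, he.isSelfAdjoint.star_eq, he.isIdempotentElem.eq]

noncomputable def supportApprox (a : A) (n : ℕ) : A := cfc (fun t : ℝ => min ((n + 1) * t) 1) a

variable {a : A}

theorem supportApprox_nonneg (ha : 0 ≤ a) (n : ℕ) : 0 ≤ supportApprox a n :=
  cfc_nonneg fun t ht => le_min (by have := spectrum_nonneg_of_nonneg ha ht; positivity) zero_le_one

theorem supportApprox_le_one (n : ℕ) : supportApprox a n ≤ 1 :=
  cfc_le_one _ _ fun _ _ => min_le_right _ _

theorem norm_supportApprox_le_one (ha : 0 ≤ a) (n : ℕ) : ‖supportApprox a n‖ ≤ 1 :=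
  norm_cfc_le zero_le_one fun t ht => by
    have := spectrum_nonneg_of_nonneg ha ht
    rw [Real.norm_of_nonneg (le_min (by positivity) zero_le_one)]
    exact min_le_right _ _

theorem monotone_supportApprox (ha : 0 ≤ a) : Monotone (supportApprox a) := by
  intro m n hmn
  refine cfc_mono (fun t ht => ?_) (by fun_prop) (by fun_prop)
  have := spectrum_nonneg_of_nonneg ha ht
  gcongr

theorem supportApprox_le_nsmul (ha : 0 ≤ a) (n : ℕ) : supportApprox a n ≤ (n + 1) • a := by
  calc supportApprox a n ≤ cfc (fun t : ℝ => (n + 1 : ℝ) * t) a :=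
        cfc_mono (fun _ _ => min_le_left _ _) (by fun_prop) (by fun_prop)
    _ = (n + 1) • a := by
        rw [cfc_const_mul_id _ a (IsSelfAdjoint.of_nonneg ha), ← Nat.cast_succ,
          Nat.cast_smul_eq_nsmul]

theorem norm_supportApprox_mul_sub_le (ha : 0 ≤ a) (n : ℕ) :
    ‖supportApprox a n * a - a‖ ≤ 1 / (n + 1) := by
  have key : supportApprox a n * a - a = cfc (fun t : ℝ => min ((n + 1) * t) 1 * t - t) a := by
    rw [cfc_sub _ _ a (by fun_prop) (by fun_prop), cfc_mul _ _ a (by fun_prop) (by fun_prop),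
      cfc_id' ℝ a, supportApprox]
  rw [key]
  refine norm_cfc_le (by positivity) fun t ht => ?_
  have ht0 := spectrum_nonneg_of_nonneg ha ht
  rw [Real.norm_eq_abs, le_div_iff₀ (by positivity)]
  rcases le_total ((n + 1) * t) 1 with h | h
  · rw [min_eq_left h, abs_of_nonpos (by nlinarith)]
    nlinarith
  · rw [min_eq_right h, one_mul, sub_self, abs_zero, zero_mul]
    exact zero_le_one

theorem tendsto_supportApprox_mul (ha : 0 ≤ a) :
    Tendsto (fun n => supportApprox a n * a) atTop (𝓝 a) := by
  rw [tendsto_iff_norm_sub_tendsto_zero]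
  exact squeeze_zero (fun _ => norm_nonneg _) (norm_supportApprox_mul_sub_le ha)
    tendsto_one_div_add_atTop_nhds_zero_nat

end CStarAlgebra

section HilbertSpace

open RCLike
open scoped InnerProductSpace

variable {H : Type*} [NormedAddCommGroup H] [InnerProductSpace ℂ H]

theorem ContinuousLinearMap.re_inner_apply_le_of_le {x y : H →L[ℂ] H} (h : x ≤ y) (ξ : H) :
    re ⟪x ξ, ξ⟫_ℂ ≤ re ⟪y ξ, ξ⟫_ℂ := by
  have := h.re_inner_nonneg_left ξ
  rwa [sub_apply, inner_sub_left, map_sub, sub_nonneg] at this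

variable [CompleteSpace H]

namespace ContinuousLinearMap

theorem le_of_forall_re_inner_apply_le {x y : H →L[ℂ] H} (hx : IsSelfAdjoint x)
    (hy : IsSelfAdjoint y) (h : ∀ ξ, re ⟪x ξ, ξ⟫_ℂ ≤ re ⟪y ξ, ξ⟫_ℂ) : x ≤ y := by
  refine (isPositive_def' (T := y - x)).mpr ⟨hy.sub hx, fun ξ => ?_⟩
  rw [reApplyInnerSelf_apply, sub_apply, inner_sub_left, map_sub, sub_nonneg]
  exact h ξ

theorem isLUB_range_of_tendsto_apply {ι : Type*} [SemilatticeSup ι] [Nonempty ι]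
    {f : ι → H →L[ℂ] H} {y : H →L[ℂ] H} (hf : Monotone f) (hfsa : ∀ i, IsSelfAdjoint (f i))
    (hy : IsSelfAdjoint y) (hfy : ∀ ξ, Tendsto (f · ξ) atTop (𝓝 (y ξ))) :
    IsLUB (Set.range f) y := by
  have hre : ∀ ξ, Tendsto (fun i => re ⟪f i ξ, ξ⟫_ℂ) atTop (𝓝 (re ⟪y ξ, ξ⟫_ℂ)) := fun ξ =>
    (continuous_re.tendsto _).comp ((hfy ξ).inner tendsto_const_nhds)
  refine ⟨?_, fun b hb => ?_⟩
  · rintro _ ⟨i, rfl⟩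
    exact le_of_forall_re_inner_apply_le (hfsa i) hy fun ξ =>
      Monotone.ge_of_tendsto (fun _ _ hij => re_inner_apply_le_of_le (hf hij) ξ) (hre ξ) i
  · obtain ⟨i₀⟩ := ‹Nonempty ι›
    have hbsa : IsSelfAdjoint b := (hfsa i₀).of_ge (hb ⟨i₀, rfl⟩)
    exact le_of_forall_re_inner_apply_le hy hbsa fun ξ =>
      le_of_tendsto' (hre ξ) fun i => re_inner_apply_le_of_le (hb ⟨i, rfl⟩) ξ

end ContinuousLinearMap

noncomputable def rangeProj (a : H →L[ℂ] H) : H →L[ℂ] H :=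
  (a : H →ₗ[ℂ] H).range.topologicalClosure.starProjection

variable {a : H →L[ℂ] H}

theorem isStarProjection_rangeProj (a : H →L[ℂ] H) : IsStarProjection (rangeProj a) :=
  isStarProjection_starProjection

theorem rangeProj_mul_self (a : H →L[ℂ] H) : rangeProj a * a = a := by
  ext ξ
  exact Submodule.starProjection_eq_self_iff.mpr
    (Submodule.le_topologicalClosure _ (LinearMap.mem_range_self _ ξ))

theorem IsSelfAdjoint.mul_rangeProj (ha : IsSelfAdjoint a) : a * rangeProj a = a := by
  simpa [ha.star_eq, (isStarProjection_rangeProj a).isSelfAdjoint.star_eq]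
    using congr(star $(rangeProj_mul_self a))

theorem rangeProj_mem {A : VonNeumannAlgebra H} (ha : a ∈ A) : rangeProj a ∈ A := by
  refine (VonNeumannAlgebra.IsStarProjection.mem_iff (isStarProjection_rangeProj a) A).mpr
    fun y hy => ?_
  rw [rangeProj, Submodule.range_starProjection]
  refine Submodule.topologicalClosure_mem_invtSubmodule <|
    (Module.End.mem_invtSubmodule _).mpr ?_
  rintro _ ⟨ζ, rfl⟩
  exact ⟨y ζ, congr($(VonNeumannAlgebra.mem_commutant_iff.mp hy a ha) ζ)⟩

theorem rangeProj_le_of_mul_eq {p : H →L[ℂ] H} (hp : IsStarProjection p) (hpa : p * a = a) :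
    rangeProj a ≤ p := by
  obtain ⟨_, hp_eq⟩ := isStarProjection_iff_eq_starProjection_range.mp hp
  rw [hp_eq, rangeProj, Submodule.starProjection_le_starProjection_iff]
  refine Submodule.topologicalClosure_minimal _ ?_
    (IsIdempotentElem.isClosed_range hp.isIdempotentElem)
  rintro _ ⟨ζ, rfl⟩
  exact ⟨a ζ, congr($hpa ζ)⟩

theorem supportApprox_mul_rangeProj (ha : 0 ≤ a) (n : ℕ) :
    supportApprox a n * rangeProj a = supportApprox a n := by
  have hq : a * (1 - rangeProj a) = 0 := by
    rw [mul_sub, mul_one, (IsSelfAdjoint.of_nonneg ha).mul_rangeProj, sub_self]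
  have := mul_eq_zero_of_le_of_mul_eq_zero (supportApprox_nonneg ha n)
    (supportApprox_le_nsmul ha n) (by rw [smul_mul_assoc, hq, smul_zero])
  rwa [mul_sub, mul_one, sub_eq_zero, eq_comm] at this

theorem tendsto_supportApprox_apply (ha : 0 ≤ a) (ξ : H) :
    Tendsto (fun n => supportApprox a n ξ) atTop (𝓝 (rangeProj a ξ)) := by
  set S := {η | Tendsto (fun n => supportApprox a n η) atTop (𝓝 (rangeProj a η))}
  have hequi : Equicontinuous fun n => ⇑(supportApprox a n) :=
    ((NormedSpace.equicontinuous_TFAE (supportApprox a)).out 1 5).mpr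
      (⟨1, norm_supportApprox_le_one ha⟩ : ∃ C, ∀ n, ‖supportApprox a n‖ ≤ C)
  have hS : IsClosed S := hequi.isClosed_setOfPred_tendsto (rangeProj a).continuous
  have hrange : ((a : H →ₗ[ℂ] H).range : Set H) ⊆ S := by
    rintro _ ⟨ζ, rfl⟩
    change Tendsto _ _ (𝓝 ((rangeProj a * a) ζ))
    rw [rangeProj_mul_self]
    exact ((apply ℂ H ζ).continuous.tendsto a).comp (tendsto_supportApprox_mul ha)
  have hmem : rangeProj a ξ ∈ S :=
    closure_minimal hrange hS (Submodule.starProjection_apply_mem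
      (a : H →ₗ[ℂ] H).range.topologicalClosure ξ)
  have hξ : ∀ n, supportApprox a n (rangeProj a ξ) = supportApprox a n ξ := fun n => by
    rw [← mul_apply_eq_comp, supportApprox_mul_rangeProj ha]
  have hr : rangeProj a (rangeProj a ξ) = rangeProj a ξ := by
    rw [← mul_apply_eq_comp, (isStarProjection_rangeProj a).isIdempotentElem.eq]
  simpa only [S, Set.mem_ofPred_eq, hξ, hr] using hmem

theorem isLUB_supportApprox (ha : 0 ≤ a) : IsLUB (Set.range (supportApprox a)) (rangeProj a) :=
  isLUB_range_of_tendsto_apply (monotone_supportApprox ha)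
    (fun n => IsSelfAdjoint.of_nonneg (supportApprox_nonneg ha n))
    (isStarProjection_rangeProj a).isSelfAdjoint (tendsto_supportApprox_apply ha)

end HilbertSpace

namespace QMP

variable {H : Type*} [NormedAddCommGroup H] [InnerProductSpace ℂ H] [CompleteSpace H]
  {A : VonNeumannAlgebra H} {T : (H →L[ℂ] H) → (H →L[ℂ] H)}

theorem IsProj.isStarProjection {p : H →L[ℂ] H} (hp : IsProj A p) : IsStarProjection p :=
  ⟨hp.2.2, hp.2.1⟩

theorem IsSupport.eq_rangeProj {a p : H →L[ℂ] H} (hp : IsSupport A a p) (ha : a ∈ A)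
    (hsa : IsSelfAdjoint a) : p = rangeProj a := by
  obtain ⟨hproj, hpap, hmin⟩ := hp
  refine le_antisymm (hmin _ ⟨rangeProj_mem ha, (isStarProjection_rangeProj a).isSelfAdjoint,
    (isStarProjection_rangeProj a).isIdempotentElem⟩ ?_)
    (rangeProj_le_of_mul_eq hproj.isStarProjection ?_)
  · rw [rangeProj_mul_self, hsa.mul_rangeProj]
  · rw [hpap, ← mul_assoc, ← mul_assoc, hproj.isStarProjection.isIdempotentElem.eq]

namespace IsMarkov

theorem map_nonneg (hT : IsMarkov A T) {x : H →L[ℂ] H} (hx : 0 ≤ x) : 0 ≤ T x := by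
  obtain ⟨b, rfl⟩ := CStarAlgebra.nonneg_iff_eq_star_mul_self.mp hx
  simpa using hT.cp 1 (fun _ => b) (fun _ => 1)

theorem monotone (hT : IsMarkov A T) : Monotone T := fun x y hxy => by
  have := hT.map_nonneg (sub_nonneg.mpr hxy)
  rwa [hT.linear.map_sub, sub_nonneg] at this

theorem map_nsmul (hT : IsMarkov A T) (n : ℕ) (x : H →L[ℂ] H) : T (n • x) = n • T x :=
  _root_.map_nsmul (IsLinearMap.mk' T hT.linear) n x

end IsMarkov

end QMP

open QMP

/-- The support projection of a superharmonic positive element is superharmonic. -/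
theorem support_of_superharmonic_is_superharmonic
    {H : Type*} [NormedAddCommGroup H] [InnerProductSpace ℂ H] [CompleteSpace H]
    (A : VonNeumannAlgebra H) (T : (H →L[ℂ] H) → (H →L[ℂ] H)) (hT : IsMarkov A T)
    (a p : H →L[ℂ] H) (ha : a ∈ A) (ha0 : 0 ≤ a) (hsuper : T a ≤ a)
    (hp : IsSupport A a p) :
    T p ≤ p := by
  have hpproj : IsStarProjection p := hp.1.isStarProjection
  have hq : IsSelfAdjoint (1 - p) := hpproj.one_sub.isSelfAdjoint
  have hqaq : (1 - p) * a * (1 - p) = 0 := by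
    rw [hp.2.1]
    simp only [← mul_assoc, hpproj.one_sub_mul_self, zero_mul]
  have hlub : IsLUB (Set.range (supportApprox a)) p :=
    hp.eq_rangeProj ha (.of_nonneg ha0) ▸ isLUB_supportApprox ha0
  refine (hT.normal _ p (monotone_supportApprox ha0) hlub).2 ?_
  rintro _ ⟨n, rfl⟩
  have hT_le_one : T (supportApprox a n) ≤ 1 := hT.unital ▸ hT.monotone (supportApprox_le_one n)
  refine hpproj.le_of_conjugate_one_sub_nonpos
    (hT.map_nonneg (supportApprox_nonneg ha0 n)) hT_le_one ?_
  calc (1 - p) * T (supportApprox a n) * (1 - p)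
      ≤ (1 - p) * T ((n + 1) • a) * (1 - p) :=
        IsSelfAdjoint.conjugate_le_conjugate (hT.monotone (supportApprox_le_nsmul ha0 n)) hq
    _ = (n + 1) • ((1 - p) * T a * (1 - p)) := by
        rw [hT.map_nsmul, mul_smul_comm, smul_mul_assoc]
    _ ≤ (n + 1) • ((1 - p) * a * (1 - p)) :=
        nsmul_le_nsmul_right (IsSelfAdjoint.conjugate_le_conjugate hsuper hq) _
    _ = 0 := by rw [hqaq, smul_zero]
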